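/- If a pattern Q is frequent in G with threshold θ (Sup(Q,G) ≥ θ), then every nonempty sub-pattern Q' of Q is also frequent: Sup(Q',G) ≥ θ. -/

import Mathlib

structure LGraph (V : Type) (L : Type) where
  adj : V → V → Prop
  label : V → L

/-- A match (label-preserving subgraph isomorphism) of pattern `Q` into graph `G`. -/
def IsMatch {P V L : Type} (Q : LGraph P L) (G : LGraph V L) (ρ : P → V) : Prop :=
  Function.Injective ρ ∧ (∀ u, G.label (ρ u) = Q.label u) ∧
    ∀ u u', Q.adj u u' → G.adj (ρ u) (ρ u')

/-- The image of a pattern node `u`: all vertices of `G` appearing as `ρ u` for some match. -/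
def Img {P V L : Type} (Q : LGraph P L) (G : LGraph V L) (u : P) : Set V :=
  {v | ∃ ρ, IsMatch Q G ρ ∧ ρ u = v}

/-- Minimum-image-based support: the minimum over pattern nodes of `|Img u|`. -/
noncomputable def Supp {P V L : Type} [Fintype P] [Nonempty P]
    (Q : LGraph P L) (G : LGraph V L) : ℕ :=
  Finset.univ.inf' Finset.univ_nonempty (fun u => (Img Q G u).ncard)

/-! Composing a match of `Q` with the embedding of `Q'` into `Q` gives a match of `Q'`, so the
image of each node of `Q'` contains the image of the corresponding node of `Q`; hence every
image size on the `Q'` side is bounded below by one on the `Q` side, and so by `Supp Q G`. -/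

section Matches

variable {P P' V L : Type} {Q : LGraph P L} {Q' : LGraph P' L} {G : LGraph V L}

theorem IsMatch.comp {ρ : P → V} {ι : P' → P} (hρ : IsMatch Q G ρ) (hι : IsMatch Q' Q ι) :
    IsMatch Q' G (ρ ∘ ι) :=
  ⟨hρ.1.comp hι.1, fun u => (hρ.2.1 (ι u)).trans (hι.2.1 u),
    fun u u' h => hρ.2.2 _ _ (hι.2.2 u u' h)⟩

theorem Img_subset_Img_of_isMatch {ι : P' → P} (hι : IsMatch Q' Q ι) (u : P') :
    Img Q G (ι u) ⊆ Img Q' G u := by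
  rintro v ⟨ρ, hρ, rfl⟩
  exact ⟨ρ ∘ ι, hρ.comp hι, rfl⟩

end Matches

theorem le_Supp_iff {P V L : Type} [Fintype P] [Nonempty P] {Q : LGraph P L} {G : LGraph V L}
    {θ : ℕ} : θ ≤ Supp Q G ↔ ∀ u, θ ≤ (Img Q G u).ncard := by
  simp [Supp, Finset.le_inf'_iff]

/-- If `Q` is frequent with threshold `θ`, every nonempty sub-pattern `Q'` is frequent. -/
theorem subpattern_frequent {P P' V L : Type} [Fintype P] [Nonempty P] [Fintype P'] [Nonempty P']
    [Fintype V]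
    (Q : LGraph P L) (Q' : LGraph P' L) (G : LGraph V L) (ι : P' → P)
    (hinj : Function.Injective ι)
    (hlab : ∀ u, Q'.label u = Q.label (ι u))
    (hadj : ∀ u u', Q'.adj u u' → Q.adj (ι u) (ι u'))
    (θ : ℕ) (hfreq : θ ≤ Supp Q G) :
    θ ≤ Supp Q' G := by
  have hι : IsMatch Q' Q ι := ⟨hinj, fun u => (hlab u).symm, hadj⟩
  refine le_Supp_iff.2 fun u => ?_
  calc θ ≤ (Img Q G (ι u)).ncard := le_Supp_iff.1 hfreq (ι u)
    _ ≤ (Img Q' G u).ncard := Set.ncard_le_ncard (Img_subset_Img_of_isMatch hι u)
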